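/- Let s ≥ 1 and let z ∈ ℝ^{N+1} be a vector with ‖z‖₁ ≤ √s + 1. Suppose C ∈ ℝ^{m×(N+1)} satisfies RIP₁,₂(8s+8, δ) with δ ≤ 1/5 and ‖Cz‖₁ ≥ 1 − δ. Then ‖z‖₂ ≥ 1/6. -/

import Mathlib

/-!
Cut the coordinates of `z`, in order of decreasing magnitude, into blocks `T₀, T₁, …` of size
`t = 8s + 8`. Every entry of `T_{k+1}` is at most the average of `|z|` over `T_k`, so
`‖z_{T_{k+1}}‖₂ ≤ ‖z_{T_k}‖₁ / √t`; summing the upper RIP bound over the blocks gives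
`‖Cz‖₁ ≤ (1 + δ) (‖z‖₂ + ‖z‖₁ / √t) ≤ (1 + δ) (‖z‖₂ + 1/2)`, because `√(8s + 8) ≥ 2 (√s + 1)`.
Against `‖Cz‖₁ ≥ 1 - δ` and `δ ≤ 1/5` this forces `‖z‖₂ ≥ 1/6`.
-/

open Finset Matrix

theorem Finset.exists_subset_card_eq_forall_le {ι α : Type*} [DecidableEq ι] [LinearOrder α]
    (f : ι → α) (S : Finset ι) :
    ∀ k ≤ S.card, ∃ T ⊆ S, T.card = k ∧ ∀ j ∈ T, ∀ i ∈ S \ T, f i ≤ f j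
  | 0, _ => ⟨∅, empty_subset S, card_empty, by simp⟩
  | k + 1, hk => by
    obtain ⟨T, hTS, hTk, hT⟩ := exists_subset_card_eq_forall_le f S k (by omega)
    have hne : (S \ T).Nonempty := by
      rw [← card_pos, card_sdiff_of_subset hTS]; omega
    obtain ⟨m, hm, hmax⟩ := (S \ T).exists_max_image f hne
    refine ⟨insert m T, insert_subset (mem_sdiff.1 hm).1 hTS, ?_, ?_⟩
    · rw [card_insert_of_notMem (mem_sdiff.1 hm).2, hTk]
    intro j hj i hi
    have hi' : i ∈ S \ T := by
      simp only [mem_sdiff, mem_insert, not_or] at hi ⊢; exact ⟨hi.1, hi.2.2⟩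
    rcases mem_insert.1 hj with rfl | hj
    · exact hmax i hi'
    · exact hT j hj i hi'

theorem sqrt_sum_sq_le_sqrt_mul_of_abs_le {ι : Type*} {T : Finset ι} {t : ℕ} (hT : T.card ≤ t)
    {w : ι → ℝ} {μ : ℝ} (hμ : 0 ≤ μ) (hw : ∀ i, |w i| ≤ μ) :
    √(∑ i ∈ T, w i ^ 2) ≤ √t * μ := by
  have hsum : ∑ i ∈ T, w i ^ 2 ≤ t * μ ^ 2 :=
    calc ∑ i ∈ T, w i ^ 2 ≤ ∑ _i ∈ T, μ ^ 2 :=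
          sum_le_sum fun i _ => sq_le_sq' (abs_le.1 (hw i)).1 (abs_le.1 (hw i)).2
      _ = T.card * μ ^ 2 := by rw [sum_const, nsmul_eq_mul]
      _ ≤ t * μ ^ 2 := by gcongr
  calc √(∑ i ∈ T, w i ^ 2) ≤ √(t * μ ^ 2) := Real.sqrt_le_sqrt hsum
    _ = √t * μ := by rw [Real.sqrt_mul (Nat.cast_nonneg t), Real.sqrt_sq hμ]

theorem sqrt_sum_sq_le_sum_abs_div_sqrt_of_forall_abs_le {ι : Type*} {T T' : Finset ι} {t : ℕ}
    (hT : T.card = t) {f g : ι → ℝ} (hg : ∀ i, ∀ j ∈ T, |g i| ≤ |f j|) (hT' : T'.card ≤ t) :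
    √(∑ i ∈ T', g i ^ 2) ≤ (∑ j ∈ T, |f j|) / √t := by
  rcases t.eq_zero_or_pos with rfl | ht
  · simp [card_eq_zero.1 (Nat.le_zero.1 hT')]
  have ht' : (0 : ℝ) < t := Nat.cast_pos.2 ht
  set μ := (∑ j ∈ T, |f j|) / t
  have hgμ : ∀ i, |g i| ≤ μ := fun i => by
    have := T.card_nsmul_le_sum (fun j => |f j|) |g i| (hg i)
    rwa [nsmul_eq_mul, hT, ← le_div_iff₀' ht'] at this
  calc √(∑ i ∈ T', g i ^ 2) ≤ √t * μ :=
        sqrt_sum_sq_le_sqrt_mul_of_abs_le hT' (by positivity) hgμ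
    _ = (∑ j ∈ T, |f j|) / √t := by
        rw [eq_div_iff (Real.sqrt_pos.2 ht').ne', mul_right_comm,
          Real.mul_self_sqrt ht'.le, mul_div_cancel₀ _ ht'.ne']

theorem card_filter_ne_zero_le {ι : Type*} [Fintype ι] {S : Finset ι} {z : ι → ℝ}
    (hz : ∀ i ∉ S, z i = 0) : (univ.filter fun i => z i ≠ 0).card ≤ S.card :=
  card_le_card fun i hi => by_contra fun h => (mem_filter.1 hi).2 (hz i h)

section Shelling

variable {ι : Type*} [Fintype ι] [DecidableEq ι] {F : (ι → ℝ) → ℝ} {t : ℕ} {K : ℝ}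

/-- Removing the `t` largest entries of `z` leaves a vector whose `t`-term restrictions have
`ℓ₂` norm at most `‖z_T‖₁ / √t`, which drives the induction on the support. -/
theorem le_mul_add_sum_abs_div_sqrt_of_sqrt_sum_sq_le (hF : ∀ u v, F (u + v) ≤ F u + F v)
    (ht : 0 < t) (hK : 0 ≤ K) (hsparse : ∀ v : ι → ℝ, (univ.filter fun i => v i ≠ 0).card ≤ t →
      F v ≤ K * √(∑ i, v i ^ 2))
    (S : Finset ι) : ∀ z : ι → ℝ, (∀ i ∉ S, z i = 0) → ∀ B : ℝ,
      (∀ T : Finset ι, T.card ≤ t → √(∑ i ∈ T, z i ^ 2) ≤ B) →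
      F z ≤ K * (B + (∑ i, |z i|) / √t) := by
  induction S using Finset.strongInduction with
  | H S ih =>
  intro z hzS B hB
  rcases le_or_gt S.card t with hSt | htS
  · calc F z ≤ K * √(∑ i, z i ^ 2) := hsparse z ((card_filter_ne_zero_le hzS).trans hSt)
      _ = K * √(∑ i ∈ S, z i ^ 2) := by
          rw [sum_subset (subset_univ S) fun i _ hi => by simp [hzS i hi]]
      _ ≤ K * (B + (∑ i, |z i|) / √t) := by
          gcongr
          exact (hB S hSt).trans (le_add_of_nonneg_right (by positivity))
  obtain ⟨T, hTS, hTt, hTmax⟩ := S.exists_subset_card_eq_forall_le (fun i => |z i|) t htS.le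
  set u : ι → ℝ := fun i => if i ∈ T then z i else 0
  set w : ι → ℝ := fun i => if i ∈ T then 0 else z i
  have hzuw : z = u + w := by ext i; by_cases hi : i ∈ T <;> simp [u, w, hi]
  have hsum_u : ∑ i, u i ^ 2 = ∑ i ∈ T, z i ^ 2 := by simp [u, apply_ite (· ^ 2), sum_ite_mem]
  have hFu : F u ≤ K * B :=
    calc F u ≤ K * √(∑ i, u i ^ 2) :=
          hsparse u ((card_filter_ne_zero_le fun i hi => if_neg hi).trans hTt.le)
      _ ≤ K * B := by rw [hsum_u]; gcongr; exact hB T hTt.le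
  have hFw : F w ≤ K * ((∑ i ∈ T, |z i|) / √t + (∑ i, |w i|) / √t) := by
    refine ih (S \ T) (sdiff_ssubset hTS (card_pos.1 (hTt ▸ ht))) w ?_ _
      fun T' hT' => sqrt_sum_sq_le_sum_abs_div_sqrt_of_forall_abs_le hTt ?_ hT'
    · intro i hi
      by_cases hiT : i ∈ T
      · exact if_pos hiT
      · exact (if_neg hiT).trans (hzS i fun hiS => hi (mem_sdiff.2 ⟨hiS, hiT⟩))
    · intro i j hj
      by_cases hiT : i ∈ T
      · simp [w, hiT]
      by_cases hiS : i ∈ S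
      · simpa [w, hiT] using hTmax j hj i (mem_sdiff.2 ⟨hiS, hiT⟩)
      · simp [w, hiT, hzS i hiS]
  have hsum_abs : ∑ i, |z i| = ∑ i ∈ T, |z i| + ∑ i, |w i| := by
    calc ∑ i, |z i| = ∑ i, (|u i| + |w i|) :=
          sum_congr rfl fun i _ => by by_cases hi : i ∈ T <;> simp [u, w, hi]
      _ = ∑ i ∈ T, |z i| + ∑ i, |w i| := by
          rw [sum_add_distrib]; simp [u, apply_ite abs, sum_ite_mem]
  calc F z ≤ F u + F w := hzuw ▸ hF u w
    _ ≤ K * B + K * ((∑ i ∈ T, |z i|) / √t + (∑ i, |w i|) / √t) := add_le_add hFu hFw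
    _ = K * (B + (∑ i, |z i|) / √t) := by rw [hsum_abs]; ring

theorem le_mul_sqrt_sum_sq_add_sum_abs_div_sqrt (hF : ∀ u v, F (u + v) ≤ F u + F v)
    (ht : 0 < t) (hK : 0 ≤ K) (hsparse : ∀ v : ι → ℝ, (univ.filter fun i => v i ≠ 0).card ≤ t →
      F v ≤ K * √(∑ i, v i ^ 2))
    (z : ι → ℝ) : F z ≤ K * (√(∑ i, z i ^ 2) + (∑ i, |z i|) / √t) :=
  le_mul_add_sum_abs_div_sqrt_of_sqrt_sum_sq_le hF ht hK hsparse univ z (by simp) _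
    fun T _ => Real.sqrt_le_sqrt <|
      sum_le_sum_of_subset_of_nonneg (subset_univ T) fun i _ _ => sq_nonneg (z i)

end Shelling

theorem sum_abs_mulVec_add_le {m n : Type*} [Fintype m] [Fintype n] (C : Matrix m n ℝ)
    (u v : n → ℝ) : ∑ i, |(C *ᵥ (u + v)) i| ≤ ∑ i, |(C *ᵥ u) i| + ∑ i, |(C *ᵥ v) i| := by
  rw [mulVec_add, ← sum_add_distrib]
  exact sum_le_sum fun i _ => abs_add_le _ _

theorem two_mul_sqrt_add_one_le_sqrt {x : ℝ} (hx : 0 ≤ x) : 2 * (√x + 1) ≤ √(8 * x + 8) := by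
  apply Real.le_sqrt_of_sq_le
  nlinarith [Real.sq_sqrt hx, sq_nonneg (√x - 1)]

theorem l2_lower_from_rip_general (m N s : ℕ) (δ : ℝ) (hδ0 : 0 ≤ δ)
    (hδ : δ ≤ 1 / 5) (C : Matrix (Fin m) (Fin (N + 1)) ℝ)
    (hRIP : ∀ v : Fin (N + 1) → ℝ,
      (Finset.univ.filter fun i => v i ≠ 0).card ≤ 8 * s + 8 →
      (1 - δ) * Real.sqrt (∑ i, v i ^ 2) ≤ ∑ i, |(C *ᵥ v) i| ∧
      ∑ i, |(C *ᵥ v) i| ≤ (1 + δ) * Real.sqrt (∑ i, v i ^ 2))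
    (z : Fin (N + 1) → ℝ)
    (hz1 : (∑ i, |z i|) ≤ Real.sqrt s + 1)
    (hz2 : 1 - δ ≤ ∑ i, |(C *ᵥ z) i|) :
    1 / 6 ≤ Real.sqrt (∑ i, z i ^ 2) := by
  have hupper := le_mul_sqrt_sum_sq_add_sum_abs_div_sqrt (sum_abs_mulVec_add_le C)
    (Nat.succ_pos _) (by linarith) (fun v hv => (hRIP v hv).2) z
  have htail : (∑ i, |z i|) / √((8 * s + 8 : ℕ) : ℝ) ≤ 1 / 2 := by
    have hsqrt := two_mul_sqrt_add_one_le_sqrt (Nat.cast_nonneg (α := ℝ) s)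
    push_cast
    rw [div_le_iff₀ (by positivity)]
    linarith
  have hlower : 1 - δ ≤ (1 + δ) * (√(∑ i, z i ^ 2) + 1 / 2) :=
    hz2.trans (hupper.trans (by gcongr))
  nlinarith

/-- If `‖z‖₁ ≤ √s + 1`, `C` satisfies `RIP₁,₂(8s+8, δ)` with `δ ≤ 1/5`, and
`‖Cz‖₁ ≥ 1 − δ`, then `‖z‖₂ ≥ 1/6`. -/
theorem l2_lower_from_rip (m N s : ℕ) (hs : 1 ≤ s) (δ : ℝ) (hδ0 : 0 ≤ δ)
    (hδ : δ ≤ 1 / 5) (C : Matrix (Fin m) (Fin (N + 1)) ℝ)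
    (hRIP : ∀ v : Fin (N + 1) → ℝ,
      (Finset.univ.filter fun i => v i ≠ 0).card ≤ 8 * s + 8 →
      (1 - δ) * Real.sqrt (∑ i, v i ^ 2) ≤ ∑ i, |(C *ᵥ v) i| ∧
      ∑ i, |(C *ᵥ v) i| ≤ (1 + δ) * Real.sqrt (∑ i, v i ^ 2))
    (z : Fin (N + 1) → ℝ)
    (hz1 : (∑ i, |z i|) ≤ Real.sqrt s + 1)
    (hz2 : 1 - δ ≤ ∑ i, |(C *ᵥ z) i|) :
    1 / 6 ≤ Real.sqrt (∑ i, z i ^ 2) :=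
  l2_lower_from_rip_general m N s δ hδ0 hδ C hRIP z hz1 hz2
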